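/- arXiv:2507.17341 — 2 statements merged into one kernel-verified Lean document; each statement's English description precedes it below -/
import Mathlib

section
/- Let ℓ ≥ 1 be an integer and let G_ℓ be the graph described in the context. Then every total dominating set D of G_ℓ contains, for each i ∈ {1,…,ℓ}, at least two vertices of the 4-cycle C_i = {(i,1),(i,2),(i,3),(i,4)}. -/
/-!
In the paper's numbering, the vertices `(i,1)` and `(i,3)` have the disjoint neighbourhoods
`{(i,2),(i,3)}` and `{(i,1),(i,4)}`, both inside `C_i`, so a total dominating set needs a
different vertex of `C_i` for each of them.
-/

/-- The edge relation of the graph `G_ℓ`: vertex `(i,j)` (0-indexed: `j : Fin 4`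
corresponds to `j+1` in the paper) with 4-cycle edges in each block and the
path edges `(i,2)(i+1,2)` (0-indexed second coordinate `1`). -/
def cycleRel (l : ℕ) (p q : Fin l × Fin 4) : Prop :=
  (p.1 = q.1 ∧ ((p.2.val = 0 ∧ q.2.val = 1) ∨ (p.2.val = 0 ∧ q.2.val = 2) ∨
     (p.2.val = 1 ∧ q.2.val = 3) ∨ (p.2.val = 2 ∧ q.2.val = 3))) ∨
  (q.1.val = p.1.val + 1 ∧ p.2.val = 1 ∧ q.2.val = 1)

/-- The graph `G_ℓ`. -/
def Gl (l : ℕ) : SimpleGraph (Fin l × Fin 4) := SimpleGraph.fromRel (cycleRel l)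

/-- `D` is a total dominating set of `G`. -/
def IsTotalDomSet {V : Type*} (G : SimpleGraph V) (D : Finset V) : Prop :=
  ∀ v : V, ∃ d ∈ D, G.Adj v d

theorem IsTotalDomSet.two_le_card_filter {V : Type*} {G : SimpleGraph V} {D : Finset V}
    (hD : IsTotalDomSet G D) (P : V → Prop) [DecidablePred P] {u v : V}
    (hu : ∀ w, G.Adj u w → P w) (hv : ∀ w, G.Adj v w → P w)
    (huv : ∀ w, G.Adj u w → ¬G.Adj v w) :
    2 ≤ (D.filter P).card := by
  obtain ⟨a, haD, hua⟩ := hD u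
  obtain ⟨b, hbD, hvb⟩ := hD v
  refine Finset.one_lt_card.mpr ⟨a, ?_, b, ?_, ?_⟩
  · exact Finset.mem_filter.mpr ⟨haD, hu a hua⟩
  · exact Finset.mem_filter.mpr ⟨hbD, hv b hvb⟩
  · rintro rfl
    exact huv a hua hvb

theorem Gl_adj_zero {l : ℕ} {i : Fin l} {q : Fin l × Fin 4} (h : (Gl l).Adj (i, 0) q) :
    q.1 = i ∧ (q.2 = 1 ∨ q.2 = 2) := by
  simp only [Gl, SimpleGraph.fromRel_adj, cycleRel] at h
  omega

theorem Gl_adj_two {l : ℕ} {i : Fin l} {q : Fin l × Fin 4} (h : (Gl l).Adj (i, 2) q) :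
    q.1 = i ∧ (q.2 = 0 ∨ q.2 = 3) := by
  simp only [Gl, SimpleGraph.fromRel_adj, cycleRel] at h
  omega

theorem stmt0_general (l : ℕ) (D : Finset (Fin l × Fin 4))
    (hD : IsTotalDomSet (Gl l) D) :
    ∀ i : Fin l, 2 ≤ (D.filter (fun p => p.1 = i)).card := by
  intro i
  refine hD.two_le_card_filter _ (u := (i, 0)) (v := (i, 2))
    (fun w h => (Gl_adj_zero h).1) (fun w h => (Gl_adj_two h).1) fun w h₀ h₂ => ?_
  have hw₀ := (Gl_adj_zero h₀).2
  have hw₂ := (Gl_adj_two h₂).2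
  omega

/-- Every total dominating set of `G_ℓ` contains at least two vertices of each
4-cycle `C_i`. -/
theorem stmt0 (l : ℕ) (hl : 1 ≤ l) (D : Finset (Fin l × Fin 4))
    (hD : IsTotalDomSet (Gl l) D) :
    ∀ i : Fin l, 2 ≤ (D.filter (fun p => p.1 = i)).card :=
  stmt0_general l D hD
end

section
/- Let ℓ ≥ 1 be an integer and let G_ℓ' be the graph described in the context. Then the total domination number of G_ℓ' equals 2ℓ + 1, i.e. γ_t(G_ℓ') = 2ℓ + 1. -/
/-- The edge relation of `G_ℓ'`: the graph `G_ℓ` with two extra vertices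
`a = Sum.inr false` and `b = Sum.inr true`, and extra edges `a(1,1)`, `b(1,4)`
(0-indexed: `(0,0)` and `(0,3)`) and `ab`. -/
def primeRel (l : ℕ) : (Fin l × Fin 4) ⊕ Bool → (Fin l × Fin 4) ⊕ Bool → Prop
  | .inl p, .inl q => cycleRel l p q
  | .inr false, .inl p => p.1.val = 0 ∧ p.2.val = 0
  | .inr true, .inl p => p.1.val = 0 ∧ p.2.val = 3
  | .inr false, .inr true => True
  | _, _ => False

/-- The graph `G_ℓ'`. -/
def Gl' (l : ℕ) : SimpleGraph ((Fin l × Fin 4) ⊕ Bool) :=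
  SimpleGraph.fromRel (primeRel l)

open Finset

namespace Gl'

variable {l : ℕ} {d : (Fin l × Fin 4) ⊕ Bool}

lemma adj_iff (u v : (Fin l × Fin 4) ⊕ Bool) :
    (Gl' l).Adj u v ↔ u ≠ v ∧ (primeRel l u v ∨ primeRel l v u) :=
  SimpleGraph.fromRel_adj _ _ _

lemma adj_inl_two_iff (i : Fin l) :
    (Gl' l).Adj (.inl (i, 2)) d ↔ d = .inl (i, 0) ∨ d = .inl (i, 3) := by
  rcases d with ⟨j, k⟩ | c
  · simp [adj_iff, primeRel, cycleRel, Fin.ext_iff, -Fin.val_eq_zero_iff]; omega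
  · cases c <;> simp [adj_iff, primeRel]

lemma adj_inl_zero_iff (i : Fin l) :
    (Gl' l).Adj (.inl (i, 0)) d ↔
      d = .inl (i, 1) ∨ d = .inl (i, 2) ∨ (i.val = 0 ∧ d = .inr false) := by
  rcases d with ⟨j, k⟩ | c
  · simp [adj_iff, primeRel, cycleRel, Fin.ext_iff, -Fin.val_eq_zero_iff]; omega
  · cases c <;> simp [adj_iff, primeRel]

lemma adj_inl_three_iff (i : Fin l) :
    (Gl' l).Adj (.inl (i, 3)) d ↔
      d = .inl (i, 1) ∨ d = .inl (i, 2) ∨ (i.val = 0 ∧ d = .inr true) := by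
  rcases d with ⟨j, k⟩ | c
  · simp [adj_iff, primeRel, cycleRel, Fin.ext_iff, -Fin.val_eq_zero_iff]; omega
  · cases c <;> simp [adj_iff, primeRel]

lemma adj_inr_false_iff (hl : 0 < l) :
    (Gl' l).Adj (.inr false) d ↔ d = .inl (⟨0, hl⟩, 0) ∨ d = .inr true := by
  rcases d with ⟨j, k⟩ | c
  · simp [adj_iff, primeRel, Fin.ext_iff, -Fin.val_eq_zero_iff]
  · cases c <;> simp [adj_iff, primeRel]

lemma adj_inr_true_iff (hl : 0 < l) :
    (Gl' l).Adj (.inr true) d ↔ d = .inl (⟨0, hl⟩, 3) ∨ d = .inr false := by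
  rcases d with ⟨j, k⟩ | c
  · simp [adj_iff, primeRel, Fin.ext_iff, -Fin.val_eq_zero_iff]
  · cases c <;> simp [adj_iff, primeRel]

def block : (Fin l × Fin 4) ⊕ Bool → ℕ
  | .inl p => p.1.val
  | .inr _ => 0

variable {D : Finset ((Fin l × Fin 4) ⊕ Bool)}

lemma two_le_card_filter_block (hD : IsTotalDomSet (Gl' l) D) (i : Fin l) :
    2 ≤ #{d ∈ D | block d = i} := by
  obtain ⟨d, hdD, hd⟩ := hD (.inl (i, 2))
  obtain ⟨e, heD, he⟩ := hD (.inl (i, 0))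
  rw [adj_inl_two_iff] at hd
  rw [adj_inl_zero_iff] at he
  refine one_lt_card.mpr ⟨d, mem_filter.mpr ⟨hdD, ?_⟩, e, mem_filter.mpr ⟨heD, ?_⟩, ?_⟩
  · rcases hd with rfl | rfl <;> rfl
  · rcases he with rfl | rfl | ⟨hi, rfl⟩
    exacts [rfl, rfl, hi.symm]
  · rcases hd with rfl | rfl <;> rcases he with rfl | rfl | ⟨-, rfl⟩ <;> simp

lemma three_le_card_filter_block_zero (hl : 0 < l) (hD : IsTotalDomSet (Gl' l) D) :
    3 ≤ #{d ∈ D | block d = 0} := by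
  set F := {d ∈ D | block d = 0}
  obtain ⟨da, hdaD, hda⟩ := hD (.inr false)
  obtain ⟨db, hdbD, hdb⟩ := hD (.inr true)
  obtain ⟨d0, hd0D, hd0⟩ := hD (.inl (⟨0, hl⟩, 0))
  obtain ⟨d2, hd2D, hd2⟩ := hD (.inl (⟨0, hl⟩, 2))
  obtain ⟨d3, hd3D, hd3⟩ := hD (.inl (⟨0, hl⟩, 3))
  rw [adj_inr_false_iff hl] at hda
  rw [adj_inr_true_iff hl] at hdb
  rw [adj_inl_zero_iff] at hd0
  rw [adj_inl_two_iff] at hd2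
  rw [adj_inl_three_iff] at hd3
  have memF {d} (hd : d ∈ D) (h : block d = 0) : d ∈ F := mem_filter.mpr ⟨hd, h⟩
  have ha : da ∈ F := memF hdaD (by rcases hda with rfl | rfl <;> rfl)
  have hb : db ∈ F := memF hdbD (by rcases hdb with rfl | rfl <;> rfl)
  have h0 : d0 ∈ F := memF hd0D (by rcases hd0 with rfl | rfl | ⟨-, rfl⟩ <;> rfl)
  have h2 : d2 ∈ F := memF hd2D (by rcases hd2 with rfl | rfl <;> rfl)
  have h3 : d3 ∈ F := memF hd3D (by rcases hd3 with rfl | rfl | ⟨-, rfl⟩ <;> rfl)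
  by_contra! hF
  have hab : da ≠ db := by rcases hda with rfl | rfl <;> rcases hdb with rfl | rfl <;> simp
  have hFab : F = {da, db} :=
    (eq_of_subset_of_card_le (insert_subset ha (singleton_subset_iff.mpr hb))
      (by rw [card_pair hab]; omega)).symm
  rw [hFab, mem_insert, mem_singleton] at h0 h2 h3
  have hdb_eq : db = .inr false := by
    rcases hda with rfl | rfl <;> rcases hdb with rfl | rfl <;>
      rcases hd0 with rfl | rfl | ⟨-, rfl⟩ <;> simp_all
  have hda_eq : da = .inr true := by
    rcases hda with rfl | rfl <;> rcases hdb with rfl | rfl <;>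
      rcases hd3 with rfl | rfl | ⟨-, rfl⟩ <;> simp_all
  subst hda_eq hdb_eq
  rcases hd2 with rfl | rfl <;> simp at h2

lemma two_mul_add_one_le_card (hl : 0 < l) (hD : IsTotalDomSet (Gl' l) D) :
    2 * l + 1 ≤ #D := by
  obtain ⟨m, rfl⟩ := Nat.exists_eq_add_one_of_ne_zero hl.ne'
  have hblock : ∀ d ∈ D, block d ∈ range (m + 1) := by
    rintro (⟨i, _⟩ | _) - <;> simp [block, Fin.is_le]
  rw [card_eq_sum_card_fiberwise hblock, sum_range_succ']
  have hsucc : ∑ b ∈ range m, 2 ≤ ∑ b ∈ range m, #{d ∈ D | block d = b + 1} :=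
    sum_le_sum fun b hb => two_le_card_filter_block hD ⟨b + 1, by simpa using hb⟩
  have hzero := three_le_card_filter_block_zero hl hD
  simp only [sum_const, card_range, smul_eq_mul] at hsucc
  omega

def twoPerCycleDomSet (l : ℕ) : Finset ((Fin l × Fin 4) ⊕ Bool) :=
  insert (.inr false) ((univ ×ˢ {0, 1}).map .inl)

lemma card_twoPerCycleDomSet : #(twoPerCycleDomSet l) = 2 * l + 1 := by
  rw [twoPerCycleDomSet, card_insert_of_notMem (by simp), card_map, card_product, card_univ,
    Fintype.card_fin, card_pair (by decide)]
  ring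

lemma isTotalDomSet_twoPerCycleDomSet (hl : 0 < l) :
    IsTotalDomSet (Gl' l) (twoPerCycleDomSet l) := by
  have mem (i : Fin l) (j : Fin 4) (hj : j = 0 ∨ j = 1) :
      (.inl (i, j) : (Fin l × Fin 4) ⊕ Bool) ∈ twoPerCycleDomSet l := by
    simpa [twoPerCycleDomSet] using hj
  rintro (⟨i, j⟩ | _ | _)
  · fin_cases j
    · exact ⟨_, mem i 1 (by simp), (adj_inl_zero_iff i).mpr (by simp)⟩
    · exact ⟨_, mem i 0 (by simp), ((adj_inl_zero_iff i).mpr (by simp)).symm⟩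
    · exact ⟨_, mem i 0 (by simp), (adj_inl_two_iff i).mpr (by simp)⟩
    · exact ⟨_, mem i 1 (by simp), (adj_inl_three_iff i).mpr (by simp)⟩
  · exact ⟨_, mem ⟨0, hl⟩ 0 (by simp), (adj_inr_false_iff hl).mpr (by simp)⟩
  · exact ⟨.inr false, mem_insert_self _ _, (adj_inr_true_iff hl).mpr (by simp)⟩

end Gl'

/-- The total domination number of `G_ℓ'` equals `2ℓ + 1`. -/
theorem stmt2 (l : ℕ) (hl : 1 ≤ l) :
    sInf {n : ℕ | ∃ D : Finset ((Fin l × Fin 4) ⊕ Bool),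
      IsTotalDomSet (Gl' l) D ∧ D.card = n} = 2 * l + 1 := by
  have hmem : 2 * l + 1 ∈ {n : ℕ | ∃ D : Finset ((Fin l × Fin 4) ⊕ Bool),
      IsTotalDomSet (Gl' l) D ∧ D.card = n} :=
    ⟨_, Gl'.isTotalDomSet_twoPerCycleDomSet hl, Gl'.card_twoPerCycleDomSet⟩
  refine le_antisymm (Nat.sInf_le hmem) (le_csInf ⟨_, hmem⟩ ?_)
  rintro n ⟨D, hD, rfl⟩
  exact Gl'.two_mul_add_one_le_card hl hD
end
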